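/- arXiv:1608.05160 — 5 statements merged into one kernel-verified Lean document; each statement's English description precedes it below -/
import Mathlib

section
/- For every ordinal γ < ε₀ that is a limit ordinal and every ordinal β < γ, the fundamental-sequence element γ[mc(β)+1] satisfies γ[mc(β)+1] > β, where mc(β) is the maximal coefficient of β. -/
open Ordinal

namespace FGH

/-- `predO α = some β` iff the ordinal notation `α` denotes the successor `β + 1`. -/
def predO : ONote → Option ONote
  | ONote.zero => none
  | ONote.oadd e n a =>
    match a with
    | ONote.oadd e₁ n₁ a₁ => (predO (ONote.oadd e₁ n₁ a₁)).map (ONote.oadd e n)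
    | ONote.zero =>
      match e with
      | ONote.oadd _ _ _ => none
      | ONote.zero =>
        match h : (n : ℕ) with
        | 1 => some ONote.zero
        | (k + 2) => some (ONote.oadd ONote.zero ⟨k + 1, by omega⟩ ONote.zero)
        | 0 => none  -- impossible since `n : ℕ+`

/-- The standard fundamental sequence on Cantor normal forms:
`(δ + ω^(β+1))[x] = δ + ω^β·x` and `(δ + ω^λ)[x] = δ + ω^(λ[x])` for `λ` a limit.
(Junk values on non-limit notations.) -/
def fundSeq : ONote → ℕ → ONote
  | ONote.zero, _ => ONote.zero
  | ONote.oadd e n a, x =>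
    match a with
    | ONote.oadd e₁ n₁ a₁ => ONote.oadd e n (fundSeq (ONote.oadd e₁ n₁ a₁) x)
    | ONote.zero =>
      let tail : ONote :=
        match predO e with
        | some e' => if h : 0 < x then ONote.oadd e' ⟨x, h⟩ ONote.zero else ONote.zero
        | none => ONote.oadd (fundSeq e x) 1 ONote.zero
      if h : 1 < (n : ℕ) then ONote.oadd e ⟨(n : ℕ) - 1, by omega⟩ tail
      else tail

/-- `γ` is a limit ordinal notation. -/
def IsLim (γ : ONote) : Prop := Order.IsSuccLimit γ.repr

/-- Maximal coefficient: `mc 0 = 0`, `mc (ω^α₀·a₀ + ⋯ + ω^αₙ·aₙ) = max_i {mc αᵢ, aᵢ}`. -/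
def mc : ONote → ℕ
  | ONote.zero => 0
  | ONote.oadd e n a => max (max (mc e) (n : ℕ)) (mc a)

/-- One computation step for the fast growing hierarchy relative to `f`. -/
def Kstep (f : ℕ → ℕ) (p : List ONote × ℕ) : List ONote × ℕ :=
  match p.1.getLast? with
  | none => p
  | some α =>
    let t := p.1.dropLast
    if α = ONote.zero then (t, f p.2)
    else
      match predO α with
      | some β => (t ++ List.replicate (p.2 + 1) β, 1)
      | none => (t ++ [fundSeq α p.2], p.2)

/-- The measure `h(α₀ ⋯ αₙ, x) = ω^α₀ + ⋯ + ω^αₙ`. -/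
noncomputable def hMeasure (p : List ONote × ℕ) : Ordinal :=
  (p.1.map (fun a => omega0 ^ a.repr)).sum

/-- `Fdef f α x y` : the derivation of `F^f_α(x)` terminates with value `y`. -/
def Fdef (f : ℕ → ℕ) (α : ONote) (x y : ℕ) : Prop :=
  ∃ n : ℕ, (Kstep f)^[n] ([α], x) = ([], y)

/-- Relational iterate: `FdefIter f α k a b` means `(F^f_α)^(k)(a) = b`. -/
def FdefIter (f : ℕ → ℕ) (α : ONote) : ℕ → ℕ → ℕ → Prop
  | 0, a, b => b = a
  | (k + 1), a, b => ∃ c, FdefIter f α k a c ∧ Fdef f α c b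

/-- The tower of `ω`s: `ω₀ = 0`, `ω_{n+1} = ω^{ω_n}`. -/
def omegaTower : ℕ → ONote
  | 0 => ONote.zero
  | (d + 1) => ONote.oadd (omegaTower d) 1 ONote.zero

end FGH

/-!
Induction on the Cantor normal form of `γ`, comparing `β` with `γ` lexicographically (leading
exponent, then coefficient, then tail). `γ[x]` agrees with `γ` except in its last term `ω^e·n`,
which becomes `ω^e·(n-1) + (ω^e)[x]`, so everything reduces to `β < ω^e ⇒ β < (ω^e)[x]`. If
`e = e' + 1` then `(ω^e)[x] = ω^e'·x`, which exceeds `β` because all coefficients of `β` are `< x`;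
if `e` is a limit then `(ω^e)[x] = ω^(e[x])` and the leading exponent of `β` is below `e[x]` by
induction, its maximal coefficient being `≤ mc β`.
-/

namespace ONote

theorem oadd_lt_oadd_of_le {e₁ e₂ o₁ o₂ : ONote} {n₁ n₂ : ℕ+} (h₁ : NF (oadd e₁ n₁ o₁))
    (he : e₁ ≤ e₂) (hn : (n₁ : ℕ) < n₂) : oadd e₁ n₁ o₁ < oadd e₂ n₂ o₂ := by
  rcases lt_or_eq_of_le (le_def.1 he) with he | he
  · exact oadd_lt_oadd_1 h₁ he
  · simp only [lt_def, repr, ← he]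
    grw [h₁.snd'.repr_lt, ← le_self_add]
    rw [← mul_add_one, mul_le_mul_iff_right₀ (opow_pos _ omega0_pos)]
    exact_mod_cast Nat.succ_le_of_lt hn

theorem oadd_lt_oadd_iff {e₁ e₂ a₁ a₂ : ONote} {n₁ n₂ : ℕ+} (h₁ : NF (oadd e₁ n₁ a₁))
    (h₂ : NF (oadd e₂ n₂ a₂)) :
    oadd e₁ n₁ a₁ < oadd e₂ n₂ a₂ ↔
      e₁ < e₂ ∨ e₁ = e₂ ∧ ((n₁ : ℕ) < n₂ ∨ n₁ = n₂ ∧ a₁ < a₂) := by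
  refine ⟨fun h => ?_, ?_⟩
  · have : NF e₁ := h₁.fst
    have : NF e₂ := h₂.fst
    rcases lt_trichotomy e₁.repr e₂.repr with he | he | he
    · exact Or.inl he
    · obtain rfl := repr_inj.1 he
      rcases lt_trichotomy (n₁ : ℕ) n₂ with hn | hn | hn
      · exact Or.inr ⟨rfl, Or.inl hn⟩
      · obtain rfl := PNat.coe_injective hn
        exact Or.inr ⟨rfl, Or.inr ⟨rfl, lt_of_add_lt_add_left (α := Ordinal) h⟩⟩
      · exact absurd h (oadd_lt_oadd_2 h₂ hn).asymm
    · exact absurd h (oadd_lt_oadd_1 h₂ he).asymm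
  · rintro (he | ⟨rfl, hn | ⟨rfl, ha⟩⟩)
    · exact oadd_lt_oadd_1 h₁ he
    · exact oadd_lt_oadd_2 h₁ hn
    · exact oadd_lt_oadd_3 ha

theorem lt_of_oadd_lt_oadd_one_zero {e₁ e a : ONote} {n : ℕ+} (h : oadd e₁ n a < oadd e 1 0) :
    e₁ < e := by
  rw [lt_def, repr, repr, PNat.one_coe, Nat.cast_one, mul_one, repr_zero, add_zero] at h
  exact (opow_lt_opow_iff_right one_lt_omega0).1 ((omega0_le_oadd _ _ _).trans_lt h)

end ONote

namespace FGH

open ONote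

theorem repr_eq_add_one_of_predO_eq_some : ∀ {o o' : ONote}, predO o = some o' →
    o.repr = o'.repr + 1
  | ONote.zero, _, h => by simp [predO] at h
  | oadd e n (oadd e₁ n₁ a₁), o', h => by
    simp only [predO, Option.map_eq_some_iff] at h
    obtain ⟨a', ha', rfl⟩ := h
    change ω ^ e.repr * n + (oadd e₁ n₁ a₁).repr = ω ^ e.repr * n + a'.repr + 1
    rw [repr_eq_add_one_of_predO_eq_some ha', add_assoc]
  | oadd ONote.zero ⟨1, _⟩ ONote.zero, o', h => by
    obtain rfl : o' = ONote.zero := by simpa [predO] using h.symm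
    simp
  | oadd ONote.zero ⟨k + 2, _⟩ ONote.zero, o', h => by
    obtain rfl : o' = oadd ONote.zero ⟨k + 1, by omega⟩ ONote.zero := by simpa [predO] using h.symm
    simp only [ONote.repr, opow_zero, one_mul, add_zero, PNat.mk_coe]
    push_cast
    rw [add_assoc, one_add_one_eq_two]
  | oadd (oadd _ _ _) _ ONote.zero, _, h => by simp [predO] at h

theorem mc_fst_le (e : ONote) (n : ℕ+) (a : ONote) : mc e ≤ mc (oadd e n a) := by
  simp [mc]

theorem coe_le_mc (e : ONote) (n : ℕ+) (a : ONote) : (n : ℕ) ≤ mc (oadd e n a) := by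
  simp [mc]

theorem mc_snd_le (e : ONote) (n : ℕ+) (a : ONote) : mc a ≤ mc (oadd e n a) := by
  simp [mc]

theorem fundSeq_oadd_oadd (e : ONote) (n : ℕ+) (e₁ : ONote) (n₁ : ℕ+) (a₁ : ONote) (x : ℕ) :
    fundSeq (oadd e n (oadd e₁ n₁ a₁)) x = oadd e n (fundSeq (oadd e₁ n₁ a₁) x) :=
  rfl

theorem fundSeq_oadd_zero_of_one_lt (e : ONote) {n : ℕ+} (hn : 1 < (n : ℕ)) (x : ℕ) :
    fundSeq (oadd e n 0) x = oadd e ⟨(n : ℕ) - 1, by omega⟩ (fundSeq (oadd e 1 0) x) := by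
  simp [fundSeq, hn]

theorem fundSeq_oadd_one_zero_of_predO_eq_some {e e' : ONote} (h : predO e = some e') {x : ℕ}
    (hx : 0 < x) : fundSeq (oadd e 1 0) x = oadd e' ⟨x, hx⟩ 0 := by
  simp [fundSeq, h, hx]

theorem fundSeq_oadd_one_zero_of_predO_eq_none {e : ONote} (h : predO e = none) (x : ℕ) :
    fundSeq (oadd e 1 0) x = oadd (fundSeq e x) 1 0 := by
  simp [fundSeq, h]

theorem lt_fundSeq_oadd_one_zero {e : ONote} {x : ℕ}
    (ih : ∀ {β : ONote}, β.NF → β < e → mc β < x → β < fundSeq e x)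
    {β : ONote} (hβ : β.NF) (hlt : β < oadd e 1 0) (hx : mc β < x) :
    β < fundSeq (oadd e 1 0) x := by
  cases hpe : predO e with
  | some e' =>
    rw [fundSeq_oadd_one_zero_of_predO_eq_some hpe (by omega)]
    obtain _ | ⟨e₀, b₀, b'⟩ := β
    · exact oadd_pos _ _ _
    have he₀ : e₀ ≤ e' := by
      have := lt_def.1 (lt_of_oadd_lt_oadd_one_zero hlt)
      rwa [repr_eq_add_one_of_predO_eq_some hpe, ← Order.succ_eq_add_one, Order.lt_succ_iff] at this
    exact oadd_lt_oadd_of_le hβ he₀ ((coe_le_mc _ _ _).trans_lt hx)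
  | none =>
    rw [fundSeq_oadd_one_zero_of_predO_eq_none hpe]
    obtain _ | ⟨e₀, b₀, b'⟩ := β
    · exact oadd_pos _ _ _
    exact oadd_lt_oadd_1 hβ <|
      ih hβ.fst (lt_of_oadd_lt_oadd_one_zero hlt) ((mc_fst_le _ _ _).trans_lt hx)

theorem lt_fundSeq {γ β : ONote} (hγ : γ.NF) (hβ : β.NF) (hlt : β < γ) {x : ℕ}
    (hx : mc β < x) : β < fundSeq γ x := by
  induction γ generalizing β with
  | zero => exact (not_lt_zero (lt_def.1 hlt)).elim
  | oadd e n a ihe iha =>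
    cases a with
    | oadd e₁ n₁ a₁ =>
      rw [fundSeq_oadd_oadd]
      obtain _ | ⟨e₀, b₀, b'⟩ := β
      · exact oadd_pos _ _ _
      rcases (oadd_lt_oadd_iff hβ hγ).1 hlt with he | ⟨rfl, hn | ⟨rfl, ha⟩⟩
      · exact oadd_lt_oadd_1 hβ he
      · exact oadd_lt_oadd_2 hβ hn
      · exact oadd_lt_oadd_3 (iha hγ.snd hβ.snd ha ((mc_snd_le _ _ _).trans_lt hx))
    | zero =>
      by_cases hn₁ : (n : ℕ) = 1
      · obtain rfl : n = 1 := PNat.coe_eq_one_iff.1 hn₁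
        exact lt_fundSeq_oadd_one_zero (ihe hγ.fst) hβ hlt hx
      have hn : 1 < (n : ℕ) := lt_of_le_of_ne n.pos (Ne.symm hn₁)
      rw [zero_def, fundSeq_oadd_zero_of_one_lt e hn]
      obtain _ | ⟨e₀, b₀, b'⟩ := β
      · exact oadd_pos _ _ _
      rcases (oadd_lt_oadd_iff hβ hγ).1 hlt with he | ⟨rfl, hb | ⟨rfl, ha⟩⟩
      · exact oadd_lt_oadd_1 hβ he
      · rcases Nat.lt_or_ge (b₀ : ℕ) (n - 1) with hb | hb
        · exact oadd_lt_oadd_2 hβ hb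
        obtain rfl : b₀ = ⟨(n : ℕ) - 1, Nat.sub_pos_of_lt hn⟩ := PNat.eq (by simp only [PNat.mk_coe]; omega)
        have hb' : b' < oadd e₀ 1 0 := hβ.snd'.repr_lt.trans_le (omega0_le_oadd _ _ _)
        exact oadd_lt_oadd_3 <|
          lt_fundSeq_oadd_one_zero (ihe hγ.fst) hβ.snd hb' ((mc_snd_le _ _ _).trans_lt hx)
      · exact (not_lt_zero (lt_def.1 ha)).elim

end FGH

open FGH

theorem stmt2_general (γ : ONote) (hγ : γ.NF) (β : ONote) (hβ : β.NF)
    (h : β.repr < γ.repr) : β.repr < (fundSeq γ (mc β + 1)).repr :=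
  lt_fundSeq hγ hβ h (Nat.lt_succ_self _)

theorem stmt2 (γ : ONote) (hγ : γ.NF) (hlim : IsLim γ) (β : ONote) (hβ : β.NF)
    (h : β.repr < γ.repr) : β.repr < (fundSeq γ (mc β + 1)).repr :=
  stmt2_general γ hγ β hβ h
end

section
/- If n is the smallest natural number such that K_f^{(n)}(([β]), y) = (empty, z), then for every finite sequence σ of ordinals, K_f^{(n)}((σ ++ [β]), y) = (σ, z). In other words, the computation steps only act on the last element of the sequence until the tail is consumed, and prepending a prefix commutes with the computation. -/
open Ordinal

open FGH

theorem Kstep_append (f : ℕ → ℕ) (σ : List ONote) {l : List ONote} (hl : l ≠ []) (x : ℕ) :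
    Kstep f (σ ++ l, x) = Prod.map (σ ++ ·) id (Kstep f (l, x)) := by
  obtain ⟨α, hα⟩ := Option.ne_none_iff_exists'.mp (mt List.getLast?_eq_none_iff.mp hl)
  have hlast : (σ ++ l).getLast? = some α := by rw [List.getLast?_append_of_ne_nil _ hl, hα]
  unfold Kstep
  simp only [hα, hlast, List.dropLast_append_of_ne_nil hl]
  split_ifs
  · rfl
  · cases predO α <;> simp

theorem iterate_Kstep_append (f : ℕ → ℕ) (σ : List ONote) :
    ∀ (n : ℕ) (p : List ONote × ℕ), (∀ m < n, ((Kstep f)^[m] p).1 ≠ []) →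
      (Kstep f)^[n] (σ ++ p.1, p.2) = Prod.map (σ ++ ·) id ((Kstep f)^[n] p)
  | 0, _, _ => rfl
  | n + 1, p, hne => by
    have hstep : Kstep f (σ ++ p.1, p.2) = (σ ++ (Kstep f p).1, (Kstep f p).2) :=
      Kstep_append f σ (hne 0 n.succ_pos) p.2
    rw [Function.iterate_succ_apply, Function.iterate_succ_apply, hstep]
    exact iterate_Kstep_append f σ n (Kstep f p) fun m hm => hne (m + 1) (by omega)

theorem stmt7 (f : ℕ → ℕ) (β : ONote) (y z n : ℕ)
    (h1 : (Kstep f)^[n] ([β], y) = ([], z))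
    (h2 : ∀ m < n, ((Kstep f)^[m] ([β], y)).1 ≠ []) :
    ∀ σ : List ONote, (Kstep f)^[n] (σ ++ [β], y) = (σ, z) := by
  intro σ
  rw [iterate_Kstep_append f σ n ([β], y) h2, h1]
  simp
end

section
/- If f : ℕ → ℕ is strictly increasing and F^f_{α+1}(x) is defined (the computation terminates), then F^f_{α+1}(x) = (F^f_α)^{(x+1)}(1), i.e., the derivation-based definition of the fast growing hierarchy satisfies the successor recursion equation. -/
open Ordinal

open FGH

/-! `Kstep` turns `[α + 1]` into `x + 1` copies of `α` started at `1`, because `predO (α + 1) = α`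
for normal forms. The machine only ever rewrites the last entry of its stack, so a run from
`t ++ s` first runs `s` to completion and then continues with `t` on the value obtained;
peeling off the copies of `α` one at a time gives `(F_α)^(x+1)(1)`. -/

namespace FGH

open ONote

theorem predO_oadd_zero_add_one (n : ℕ+) :
    predO (oadd 0 (n + 1) 0) = some (oadd 0 n 0) := by
  obtain ⟨k, hk⟩ := Nat.exists_eq_add_of_lt n.pos
  obtain rfl : n = ⟨k + 1, k.succ_pos⟩ := PNat.eq (by simp only [PNat.mk_coe]; omega)
  rfl

theorem addAux_of_lt {e e' : ONote} [NF e] [NF e'] (h : e' < e) (n n' : ℕ+) (a' : ONote) :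
    addAux e n (oadd e' n' a') = oadd e n (oadd e' n' a') := by
  have hcmp : e.cmp e' = Ordering.gt := (cmp_compares e e').eq_gt.2 h
  simp only [addAux, hcmp]

theorem nfBelow_one (e : ONote) (n : ℕ+) (a : ONote) : NFBelow 1 (oadd e n a).repr :=
  (nfBelow_ofNat 1).mono (Order.one_le_iff_pos.2 (lt_def.1 (oadd_pos e n a)))

theorem predO_add_one {α : ONote} (hα : α.NF) : predO (α + 1) = some α := by
  induction α with
  | zero => rfl
  | oadd e n b _ ihb =>
    cases e with
    | zero =>
      obtain rfl : b = 0 := hα.zero_of_zero rfl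
      exact predO_oadd_zero_add_one n
    | oadd e' n' a' =>
      have hb := ihb hα.snd
      obtain ⟨eb, m, c, hbc⟩ : ∃ eb m c, b + 1 = oadd eb m c := by
        cases hb1 : b + 1 with
        | zero => rw [hb1] at hb; cases hb
        | oadd eb m c => exact ⟨eb, m, c, rfl⟩
      have hbelow := add_nfBelow hα.snd' (nfBelow_one e' n' a')
      rw [hbc] at hbelow
      have := hα.fst
      have := hbelow.fst
      calc predO (oadd (oadd e' n' a') n b + 1)
          = predO (oadd (oadd e' n' a') n (oadd eb m c)) := by
            rw [oadd_add, hbc, addAux_of_lt (lt_def.2 hbelow.lt)]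
        _ = (predO (b + 1)).map (oadd (oadd e' n' a') n) := by rw [hbc]; rfl
        _ = some (oadd (oadd e' n' a') n b) := by rw [hb]; rfl

def Halts (f : ℕ → ℕ) (p : List ONote × ℕ) (y : ℕ) : Prop :=
  ∃ n : ℕ, (Kstep f)^[n] p = ([], y)

variable {f : ℕ → ℕ}

theorem fdef_iff_halts {α : ONote} {x y : ℕ} : Fdef f α x y ↔ Halts f ([α], x) y := Iff.rfl

theorem Kstep_nil (a : ℕ) : Kstep f ([], a) = ([], a) := rfl

theorem halts_nil_iff {a y : ℕ} : Halts f ([], a) y ↔ y = a := by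
  have hfix : ∀ n, (Kstep f)^[n] ([], a) = ([], a) :=
    fun n => Function.iterate_fixed (Kstep_nil a) n
  simp only [Halts, hfix, Prod.mk.injEq, true_and, exists_const, eq_comm]

theorem Kstep_append {s : List ONote} (t : List ONote) (hs : s ≠ []) (a : ℕ) :
    Kstep f (t ++ s, a) = (t ++ (Kstep f (s, a)).1, (Kstep f (s, a)).2) := by
  obtain ⟨r, β, rfl⟩ := List.eq_nil_or_concat s |>.resolve_left hs
  simp only [Kstep, List.concat_eq_append, ← List.append_assoc, List.getLast?_concat,
    List.dropLast_concat]
  split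
  · rfl
  · split <;> simp

theorem Halts.kstep {p : List ONote × ℕ} {y : ℕ} (h : Halts f p y) : Halts f (Kstep f p) y := by
  obtain ⟨_ | n, hn⟩ := h
  · exact ⟨0, by rw [Function.iterate_zero_apply] at hn; rw [hn]; rfl⟩
  · exact ⟨n, by rwa [Function.iterate_succ_apply] at hn⟩

theorem Halts.of_kstep {p : List ONote × ℕ} {y : ℕ} (h : Halts f (Kstep f p) y) : Halts f p y :=
  let ⟨n, hn⟩ := h
  ⟨n + 1, by rwa [Function.iterate_succ_apply]⟩

theorem Halts.of_append {t s : List ONote} {a y : ℕ} (h : Halts f (t ++ s, a) y) :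
    ∃ b, Halts f (s, a) b ∧ Halts f (t, b) y := by
  obtain ⟨n, hn⟩ := h
  induction n generalizing s a with
  | zero =>
    obtain ⟨rfl, rfl⟩ := List.append_eq_nil_iff.1 (congrArg Prod.fst hn)
    exact ⟨a, halts_nil_iff.2 rfl, 0, hn⟩
  | succ n ih =>
    rcases eq_or_ne s [] with rfl | hs
    · exact ⟨a, halts_nil_iff.2 rfl, n + 1, by simpa using hn⟩
    · rw [Function.iterate_succ_apply, Kstep_append t hs] at hn
      obtain ⟨b, hb, hby⟩ := ih hn
      exact ⟨b, hb.of_kstep, hby⟩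

theorem Kstep_singleton_of_predO_eq_some {β γ : ONote} (h : predO β = some γ) (a : ℕ) :
    Kstep f ([β], a) = (List.replicate (a + 1) γ, 1) := by
  have hβ : β ≠ 0 := by rintro rfl; cases h
  simp [Kstep, hβ, h]

theorem FdefIter_of_halts_replicate {α : ONote} {k a y : ℕ}
    (h : Halts f (List.replicate k α, a) y) : FdefIter f α k a y := by
  induction k generalizing y with
  | zero => exact halts_nil_iff.1 h
  | succ k ih =>
    rw [List.replicate_succ, ← List.singleton_append] at h
    obtain ⟨b, hk, hb⟩ := h.of_append
    exact ⟨b, ih hk, hb⟩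

end FGH

theorem stmt9_general (f : ℕ → ℕ) (α : ONote) (hα : α.NF) (x y : ℕ)
    (h : Fdef f (α + 1) x y) : FdefIter f α (x + 1) 1 y := by
  have hstep := Kstep_singleton_of_predO_eq_some (f := f) (predO_add_one hα) x
  exact FdefIter_of_halts_replicate (hstep ▸ (fdef_iff_halts.1 h).kstep)

theorem stmt9 (f : ℕ → ℕ) (hf : StrictMono f) (α : ONote) (hα : α.NF) (x y : ℕ)
    (h : Fdef f (α + 1) x y) : FdefIter f α (x + 1) 1 y :=
  stmt9_general f α hα x y h
end

section
/- If F^f_γ(x) is defined and γ < ε₀ is a limit ordinal, then F^f_γ(x) = F^f_{γ[x]}(x), i.e., the derivation-based definition satisfies the limit recursion equation. -/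
open Ordinal

/-! A limit notation is neither `0` nor a successor (a successor has `predO γ = some β`), so the
first computation step rewrites `([γ], x)` to `([γ[x]], x)`; the remaining steps are then a
derivation of `F_{γ[x]}(x)`. -/

namespace FGH

theorem repr_eq_repr_add_one_of_predO_eq_some :
    ∀ {γ β : ONote}, predO γ = some β → γ.repr = β.repr + 1
  | ONote.zero, _, h => by simp [predO] at h
  | ONote.oadd e n (ONote.oadd e₁ n₁ a₁), _, h => by
    simp only [predO, Option.map_eq_some_iff] at h
    obtain ⟨β', hβ', rfl⟩ := h
    have ih := repr_eq_repr_add_one_of_predO_eq_some hβ'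
    simp only [ONote.repr] at ih ⊢
    rw [ih, add_assoc]
  | ONote.oadd (ONote.oadd _ _ _) _ ONote.zero, _, h => by simp [predO] at h
  | ONote.oadd ONote.zero ⟨n, hn⟩ ONote.zero, β, h => by
    match n, hn with
    | 1, _ =>
      simp [predO] at h
      subst h
      simp [ONote.repr]
    | k + 2, _ =>
      simp [predO] at h
      subst h
      simp only [ONote.repr, opow_zero, one_mul, add_zero, PNat.mk_coe]
      push_cast
      rw [add_assoc, one_add_one_eq_two]

theorem predO_eq_none_of_isLim {γ : ONote} (h : IsLim γ) : predO γ = none := by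
  cases hp : predO γ with
  | none => rfl
  | some β =>
    have hsucc : Order.IsSuccLimit (Order.succ β.repr) := by
      rw [Order.succ_eq_add_one, ← repr_eq_repr_add_one_of_predO_eq_some hp]
      exact h
    exact absurd hsucc (Order.not_isSuccLimit_succ _)

theorem ne_zero_of_isLim {γ : ONote} (h : IsLim γ) : γ ≠ 0 := by
  rintro rfl
  simp [IsLim, ONote.repr] at h

theorem Kstep_append_of_isLim (f : ℕ → ℕ) (t : List ONote) {γ : ONote} (hγ : IsLim γ) (x : ℕ) :
    Kstep f (t ++ [γ], x) = (t ++ [fundSeq γ x], x) := by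
  simp [Kstep, ne_zero_of_isLim hγ, predO_eq_none_of_isLim hγ]

end FGH

open FGH

theorem stmt10_general (f : ℕ → ℕ) (γ : ONote) (hlim : IsLim γ) (x y : ℕ)
    (h : Fdef f γ x y) : Fdef f (fundSeq γ x) x y := by
  obtain ⟨_ | n, hn⟩ := h
  · simp at hn
  · refine ⟨n, ?_⟩
    have hstep : Kstep f ([γ], x) = ([fundSeq γ x], x) := by
      simpa using Kstep_append_of_isLim f [] hlim x
    rwa [Function.iterate_succ_apply, hstep] at hn

theorem stmt10 (f : ℕ → ℕ) (γ : ONote) (hγ : γ.NF) (hlim : IsLim γ) (x y : ℕ)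
    (h : Fdef f γ x y) : Fdef f (fundSeq γ x) x y :=
  stmt10_general f γ hlim x y h
end

section
/- For every ordinal β < ε₀ and every natural x ≥ 1, in the step K_f applied to a state whose sequence ends in the successor β+1, the h-measure of the result equals h of the original state minus ω^{β+1} plus ω^β·(x+1), and hence strictly decreases: h(t ++ (x+1 copies of β), 1) < h(t ++ [β+1], x). -/
open Ordinal

open FGH

namespace FGH

theorem hMeasure_append (s u : List ONote) (x y z : ℕ) :
    hMeasure (s ++ u, x) = hMeasure (s, y) + hMeasure (u, z) := by
  simp only [hMeasure, List.map_append, List.sum_append]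

theorem hMeasure_singleton (α : ONote) (x : ℕ) : hMeasure ([α], x) = ω ^ α.repr := by
  simp [hMeasure]

theorem hMeasure_replicate (α : ONote) (n x : ℕ) :
    hMeasure (List.replicate n α, x) = ω ^ α.repr * n := by
  induction n with
  | zero => simp [hMeasure]
  | succ n ih =>
    rw [List.replicate_succ', hMeasure_append _ _ x x x, ih, hMeasure_singleton, Nat.cast_succ,
      mul_add_one]

end FGH

theorem ONote.repr_add_one (β : ONote) [β.NF] : (β + 1).repr = β.repr + 1 := by
  rw [ONote.repr_add, ONote.repr_one, Nat.cast_one]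

theorem stmt16_general (β : ONote) (hβ : β.NF) (t : List ONote) (x : ℕ) :
    hMeasure (t ++ List.replicate (x + 1) β, 1)
        = hMeasure (t, 1) + omega0 ^ β.repr * (x + 1)
    ∧ hMeasure (t ++ [β + 1], x) = hMeasure (t, 1) + omega0 ^ (β.repr + 1)
    ∧ hMeasure (t ++ List.replicate (x + 1) β, 1) < hMeasure (t ++ [β + 1], x) := by
  have h_after : hMeasure (t ++ List.replicate (x + 1) β, 1)
      = hMeasure (t, 1) + omega0 ^ β.repr * (x + 1) := by
    rw [hMeasure_append _ _ 1 1 1, hMeasure_replicate, Nat.cast_succ]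
  have h_before : hMeasure (t ++ [β + 1], x) = hMeasure (t, 1) + omega0 ^ (β.repr + 1) := by
    rw [hMeasure_append _ _ x 1 x, hMeasure_singleton, ONote.repr_add_one]
  refine ⟨h_after, h_before, ?_⟩
  rw [h_after, h_before, add_lt_add_iff_left]
  exact opow_mul_lt_opow (by exact_mod_cast natCast_lt_omega0 (x + 1)) (lt_add_one _)

theorem stmt16 (β : ONote) (hβ : β.NF) (t : List ONote) (x : ℕ) (hx : 1 ≤ x) :
    hMeasure (t ++ List.replicate (x + 1) β, 1)
        = hMeasure (t, 1) + omega0 ^ β.repr * (x + 1)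
    ∧ hMeasure (t ++ [β + 1], x) = hMeasure (t, 1) + omega0 ^ (β.repr + 1)
    ∧ hMeasure (t ++ List.replicate (x + 1) β, 1) < hMeasure (t ++ [β + 1], x) :=
  stmt16_general β hβ t x
end
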